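/- arXiv:1807.03728 — 3 statements merged into one kernel-verified Lean document; each statement's English description precedes it below -/
import Mathlib

section
/- For λ > 0, the coefficients of the stage f^{(1)} = e^{-λ/2} g + (1 - e^{-λ/2} - (λ/2) e^{-λ/2}) M + (λ/2) e^{-λ/2} P are nonnegative and sum to 1; likewise for f^1 = e^{-λ} g + (1 - e^{-λ} - λ e^{-λ/2}) M + λ e^{-λ/2} P. In particular, if g, M, P ≥ 0 pointwise, then f^{(1)} ≥ 0 and f^1 ≥ 0. -/
/-!
Each stage is a combination of `g`, `M`, `P` whose coefficients visibly sum to `1`, so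
everything reduces to the nonnegativity of the `M`-coefficients. For the first stage this is
`(1 + x) e^{-x} ≤ 1` with `x = λ/2`, i.e. `1 + x ≤ e^x`. For the second, multiplying by
`e^{λ/2}` turns `1 - e^{-λ} - λ e^{-λ/2} ≥ 0` into `λ/2 ≤ sinh (λ/2)`.
-/

open Real

lemma one_add_mul_exp_neg_le_one (x : ℝ) : (1 + x) * exp (-x) ≤ 1 := by
  have hexp : exp x * exp (-x) = 1 := by rw [← exp_add, add_neg_cancel, exp_zero]
  nlinarith [add_one_le_exp x, exp_pos (-x)]

lemma mul_exp_neg_half_add_exp_neg_le_one {x : ℝ} (hx : 0 ≤ x) :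
    x * exp (-(x / 2)) + exp (-x) ≤ 1 := by
  have hsinh : x / 2 ≤ (exp (x / 2) - exp (-(x / 2))) / 2 := by
    rw [← sinh_eq]; exact self_le_sinh_iff.mpr (by linarith)
  have hexp : exp (x / 2) * exp (-(x / 2)) = 1 := by rw [← exp_add, add_neg_cancel, exp_zero]
  have hsq : exp (-(x / 2)) * exp (-(x / 2)) = exp (-x) := by rw [← exp_add]; ring_nf
  nlinarith [exp_pos (-(x / 2))]

lemma weighted_sum_nonneg {a b c u v w : ℝ} (ha : 0 ≤ a) (hb : 0 ≤ b) (hc : 0 ≤ c)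
    (hu : 0 ≤ u) (hv : 0 ≤ v) (hw : 0 ≤ w) : 0 ≤ a * u + b * v + c * w :=
  add_nonneg (add_nonneg (mul_nonneg ha hu) (mul_nonneg hb hv)) (mul_nonneg hc hw)

theorem stmt_6 {α : Type*} (lam : ℝ) (hlam : 0 < lam) :
    (0 ≤ Real.exp (-(lam/2)) ∧
     0 ≤ 1 - Real.exp (-(lam/2)) - (lam/2) * Real.exp (-(lam/2)) ∧
     0 ≤ (lam/2) * Real.exp (-(lam/2)) ∧
     Real.exp (-(lam/2)) + (1 - Real.exp (-(lam/2)) - (lam/2) * Real.exp (-(lam/2)))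
       + (lam/2) * Real.exp (-(lam/2)) = 1) ∧
    (0 ≤ Real.exp (-lam) ∧
     0 ≤ 1 - Real.exp (-lam) - lam * Real.exp (-(lam/2)) ∧
     0 ≤ lam * Real.exp (-(lam/2)) ∧
     Real.exp (-lam) + (1 - Real.exp (-lam) - lam * Real.exp (-(lam/2)))
       + lam * Real.exp (-(lam/2)) = 1) ∧
    (∀ g M P : α → ℝ, (∀ x, 0 ≤ g x) → (∀ x, 0 ≤ M x) → (∀ x, 0 ≤ P x) →
      (∀ x, 0 ≤ Real.exp (-(lam/2)) * g x
          + (1 - Real.exp (-(lam/2)) - (lam/2) * Real.exp (-(lam/2))) * M x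
          + (lam/2) * Real.exp (-(lam/2)) * P x) ∧
      (∀ x, 0 ≤ Real.exp (-lam) * g x
          + (1 - Real.exp (-lam) - lam * Real.exp (-(lam/2))) * M x
          + lam * Real.exp (-(lam/2)) * P x)) := by
  have hhalf : 0 ≤ exp (-(lam / 2)) := (exp_pos _).le
  have hfull : 0 ≤ exp (-lam) := (exp_pos _).le
  have hM₁ : 0 ≤ 1 - exp (-(lam / 2)) - (lam / 2) * exp (-(lam / 2)) := by
    linarith [one_add_mul_exp_neg_le_one (lam / 2)]
  have hM₂ : 0 ≤ 1 - exp (-lam) - lam * exp (-(lam / 2)) := by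
    linarith [mul_exp_neg_half_add_exp_neg_le_one hlam.le]
  have hP₁ : 0 ≤ (lam / 2) * exp (-(lam / 2)) := by positivity
  have hP₂ : 0 ≤ lam * exp (-(lam / 2)) := by positivity
  refine ⟨⟨hhalf, hM₁, hP₁, by ring⟩, ⟨hfull, hM₂, hP₂, by ring⟩, ?_⟩
  intro g M P hg hM hP
  exact ⟨fun x => weighted_sum_nonneg hhalf hM₁ hP₁ (hg x) (hM x) (hP x),
    fun x => weighted_sum_nonneg hfull hM₂ hP₂ (hg x) (hM x) (hP x)⟩
end

section
/- Let M_i > 0 for i = 1,…,N with periodic indexing, and consider the flux F_{i+1/2} = (√(M_i M_{i+1})/Δv)(f_{i+1}/M_{i+1} - f_i/M_i) for positive f_i. Then ∑_i (F_{i+1/2} - F_{i-1/2})(log(f_i/M_i) + 1) = -∑_i F_{i+1/2}(log(f_{i+1}/M_{i+1}) - log(f_i/M_i)) ≤ 0, with equality if and only if f_i/M_i is constant in i. -/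
/-!
Abel summation on the periodic grid turns the entropy production into
`-∑ cᵢ (xᵢ₊₁ - xᵢ)(log xᵢ₊₁ - log xᵢ)` with `xᵢ = fᵢ / Mᵢ` and `cᵢ = √(Mᵢ Mᵢ₊₁) / Δv > 0`.
Since `log` is strictly increasing, every term is nonnegative and vanishes exactly when
`xᵢ₊₁ = xᵢ`; on the cyclic grid this forces `x` to be constant.
-/

open Finset Real

theorem Fintype.sum_sub_shift_mul {G R : Type*} [Fintype G] [AddGroup G] [CommRing R]
    (a : G) (F g : G → R) :
    ∑ i, (F i - F (i - a)) * g i = -∑ i, F i * (g (i + a) - g i) := by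
  have hshift : ∑ i, F (i - a) * g i = ∑ i, F i * g (i + a) :=
    (Equiv.sum_comp (Equiv.addRight a) _).symm.trans (by simp)
  simp only [sub_mul, mul_sub, sum_sub_distrib, hshift, neg_sub]

theorem StrictMonoOn.sub_mul_sub_pos {s : Set ℝ} {φ : ℝ → ℝ} (hφ : StrictMonoOn φ s)
    {x y : ℝ} (hx : x ∈ s) (hy : y ∈ s) (hxy : x ≠ y) :
    0 < (y - x) * (φ y - φ x) := by
  rcases hxy.lt_or_gt with h | h
  · exact mul_pos (sub_pos.2 h) (sub_pos.2 (hφ hx hy h))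
  · exact mul_pos_of_neg_of_neg (sub_neg.2 h) (sub_neg.2 (hφ hy hx h))

theorem StrictMonoOn.sub_mul_sub_nonneg {s : Set ℝ} {φ : ℝ → ℝ} (hφ : StrictMonoOn φ s)
    {x y : ℝ} (hx : x ∈ s) (hy : y ∈ s) :
    0 ≤ (y - x) * (φ y - φ x) := by
  rcases eq_or_ne x y with rfl | hxy
  · simp
  · exact (hφ.sub_mul_sub_pos hx hy hxy).le

theorem StrictMonoOn.sub_mul_sub_eq_zero_iff {s : Set ℝ} {φ : ℝ → ℝ} (hφ : StrictMonoOn φ s)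
    {x y : ℝ} (hx : x ∈ s) (hy : y ∈ s) :
    (y - x) * (φ y - φ x) = 0 ↔ y = x := by
  refine ⟨fun h => ?_, fun h => by simp [h]⟩
  by_contra hyx
  exact (hφ.sub_mul_sub_pos hx hy (Ne.symm hyx)).ne' h

theorem Fin.forall_eq_of_forall_add_one_eq {N : ℕ} [NeZero N] {α : Type*} {x : Fin N → α}
    (h : ∀ i, x (i + 1) = x i) (i j : Fin N) : x i = x j := by
  obtain ⟨n, rfl⟩ : ∃ n, N = n + 1 := Nat.exists_eq_succ_of_ne_zero (NeZero.ne N)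
  have hx0 : ∀ k, x k = x 0 := fun k =>
    Fin.induction rfl (fun k hk => by rw [← Fin.coeSucc_eq_succ, h, hk]) k
  rw [hx0 i, hx0 j]

section Dissipation

variable {N : ℕ} [NeZero N] {c x : Fin N → ℝ}

theorem log_dissipation_nonneg (hc : ∀ i, 0 < c i) (hx : ∀ i, 0 < x i) :
    0 ≤ ∑ i, c i * ((x (i + 1) - x i) * (log (x (i + 1)) - log (x i))) :=
  sum_nonneg fun i _ => mul_nonneg (hc i).le <|
    strictMonoOn_log.sub_mul_sub_nonneg (hx i) (hx (i + 1))

theorem log_dissipation_eq_zero_iff (hc : ∀ i, 0 < c i) (hx : ∀ i, 0 < x i) :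
    ∑ i, c i * ((x (i + 1) - x i) * (log (x (i + 1)) - log (x i))) = 0 ↔
      ∀ i j, x i = x j := by
  rw [sum_eq_zero_iff_of_nonneg fun i _ => mul_nonneg (hc i).le <|
    strictMonoOn_log.sub_mul_sub_nonneg (hx i) (hx (i + 1))]
  simp only [mem_univ, true_implies, mul_eq_zero, (hc _).ne', false_or,
    strictMonoOn_log.sub_mul_sub_eq_zero_iff (hx _) (hx _)]
  exact ⟨Fin.forall_eq_of_forall_add_one_eq, fun h i => h _ _⟩

end Dissipation

theorem stmt_12 {N : ℕ} [NeZero N] (f M : Fin N → ℝ) (Δv : ℝ) (hΔv : 0 < Δv)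
    (hf : ∀ i, 0 < f i) (hM : ∀ i, 0 < M i)
    (F : Fin N → ℝ)
    (hF : ∀ i : Fin N, F i =
      Real.sqrt (M i * M (i + 1)) / Δv * (f (i + 1) / M (i + 1) - f i / M i)) :
    (∑ i, (F i - F (i - 1)) * (Real.log (f i / M i) + 1) =
      -∑ i, F i * (Real.log (f (i + 1) / M (i + 1)) - Real.log (f i / M i))) ∧
    (∑ i, (F i - F (i - 1)) * (Real.log (f i / M i) + 1) ≤ 0) ∧
    ((∑ i, (F i - F (i - 1)) * (Real.log (f i / M i) + 1) = 0) ↔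
      ∀ i j : Fin N, f i / M i = f j / M j) := by
  have habel := Fintype.sum_sub_shift_mul 1 F fun i => log (f i / M i) + 1
  simp only [add_sub_add_right_eq_sub] at habel
  have hdiss : ∑ i, F i * (log (f (i + 1) / M (i + 1)) - log (f i / M i)) =
      ∑ i, sqrt (M i * M (i + 1)) / Δv *
        ((f (i + 1) / M (i + 1) - f i / M i) * (log (f (i + 1) / M (i + 1)) - log (f i / M i))) :=
    sum_congr rfl fun i _ => by rw [hF i, mul_assoc]
  have hc : ∀ i, 0 < sqrt (M i * M (i + 1)) / Δv := fun i =>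
    div_pos (sqrt_pos.2 (mul_pos (hM i) (hM (i + 1)))) hΔv
  have hx : ∀ i, 0 < f i / M i := fun i => div_pos (hf i) (hM i)
  refine ⟨habel, ?_, ?_⟩
  · rw [habel, hdiss, neg_nonpos]
    exact log_dissipation_nonneg hc hx
  · rw [habel, hdiss, neg_eq_zero]
    exact log_dissipation_eq_zero_iff hc hx
end

section
/- Suppose T : V → V satisfies: for all f ≥ 0 and all a with 0 ≤ aΔt ≤ Δt_FE, f + aΔt T(f) ≥ 0; and suppose E_s : V → V satisfies g ≥ 0 ⟹ E_s g ≥ 0 for all s ≥ 0. Then the composite update f^{n+1} = E_{a2Δt}( w (Id + b2Δt T)(E_{a1Δt}((Id + b1Δt T)(E_{a0Δt} f^n))) + (1-w) E_{(1-a2)Δt} f^n ) preserves nonnegativity, provided a0, a1, b1, b2 ≥ 0, 0 ≤ a2, w ≤ 1, and Δt ≤ Δt_FE / max(b1, b2). -/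
/-! Every stage of the update is either an exact step `E_s` with `s ≥ 0`, a forward Euler step
`Id + bΔt T` with `0 ≤ bΔt ≤ Δt_FE`, or a convex combination; each of these maps nonnegative
functions to nonnegative functions, so nonnegativity propagates through the composite. -/

theorem smul_add_one_sub_smul_nonneg {𝕜 M : Type*} [Ring 𝕜] [PartialOrder 𝕜] [IsOrderedRing 𝕜]
    [AddCommMonoid M] [PartialOrder M] [IsOrderedAddMonoid M] [Module 𝕜 M] [PosSMulMono 𝕜 M]
    {w : 𝕜} {f g : M} (hw : 0 ≤ w) (hw' : w ≤ 1) (hf : 0 ≤ f) (hg : 0 ≤ g) :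
    0 ≤ w • f + (1 - w) • g :=
  add_nonneg (smul_nonneg hw hf) (smul_nonneg (sub_nonneg.2 hw') hg)

theorem stmt_14 {α : Type*}
    (T : (α → ℝ) → (α → ℝ)) (E : ℝ → (α → ℝ) → (α → ℝ))
    (Δt ΔtFE : ℝ) (hΔt : 0 ≤ Δt)
    (hT : ∀ f : α → ℝ, (∀ x, 0 ≤ f x) →
      ∀ a : ℝ, 0 ≤ a * Δt → a * Δt ≤ ΔtFE →
        ∀ x, 0 ≤ (f + (a * Δt) • T f) x)
    (hE : ∀ s : ℝ, 0 ≤ s → ∀ g : α → ℝ, (∀ x, 0 ≤ g x) → ∀ x, 0 ≤ E s g x)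
    (a0 a1 a2 b1 b2 w : ℝ)
    (ha0 : 0 ≤ a0) (ha1 : 0 ≤ a1) (hb1 : 0 ≤ b1) (hb2 : 0 ≤ b2)
    (ha2 : 0 ≤ a2) (ha2' : a2 ≤ 1) (hw : 0 ≤ w) (hw' : w ≤ 1)
    (hCFL : max b1 b2 * Δt ≤ ΔtFE)
    (fn : α → ℝ) (hfn : ∀ x, 0 ≤ fn x) :
    ∀ x, 0 ≤
      (E (a2 * Δt)
        (w • (let f0 := E (a0 * Δt) fn
              let f1 := E (a1 * Δt) (f0 + (b1 * Δt) • T f0)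
              f1 + (b2 * Δt) • T f1)
          + (1 - w) • E ((1 - a2) * Δt) fn)) x := by
  have hb1Δt : b1 * Δt ≤ ΔtFE :=
    (mul_le_mul_of_nonneg_right (le_max_left b1 b2) hΔt).trans hCFL
  have hb2Δt : b2 * Δt ≤ ΔtFE :=
    (mul_le_mul_of_nonneg_right (le_max_right b1 b2) hΔt).trans hCFL
  set f0 := E (a0 * Δt) fn
  set f1 := E (a1 * Δt) (f0 + (b1 * Δt) • T f0)
  have hf0 : 0 ≤ f0 := hE _ (mul_nonneg ha0 hΔt) fn hfn
  have hf1 : 0 ≤ f1 :=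
    hE _ (mul_nonneg ha1 hΔt) _ (hT f0 hf0 b1 (mul_nonneg hb1 hΔt) hb1Δt)
  have hstage : 0 ≤ f1 + (b2 * Δt) • T f1 := hT f1 hf1 b2 (mul_nonneg hb2 hΔt) hb2Δt
  have hbranch : 0 ≤ E ((1 - a2) * Δt) fn := hE _ (mul_nonneg (sub_nonneg.2 ha2') hΔt) fn hfn
  exact hE _ (mul_nonneg ha2 hΔt) _ (smul_add_one_sub_smul_nonneg hw hw' hstage hbranch)
end
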